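/- Let R be a 2-torsion free commutative ring with identity, X a locally finite preordered set, and D : I(X,R) → I(X,R) a Jordan derivation of the incidence algebra. Then for all i, j ∈ X with i ≤ j and j ≤ i (in particular for i = j), D(e_{ij})(i,j) + D(e_{ji})(j,i) = 0. -/
import Mathlib

def eSingle (R : Type*) [CommRing R] {X : Type*} [Preorder X] [DecidableEq X]
    (x y : X) (h : x ≤ y) : IncidenceAlgebra R X :=
  ⟨fun a b => if a = x ∧ b = y then 1 else 0,
   fun a b hab => if_neg (by rintro ⟨rfl, rfl⟩; exact hab h)⟩

section helpers
variable {R X : Type*} [CommRing R] [Preorder X] [LocallyFiniteOrder X] [DecidableEq X]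

omit [LocallyFiniteOrder X] in
lemma eSingle_apply (x y : X) (h : x ≤ y) (a b : X) :
    eSingle R x y h a b = if a = x ∧ b = y then 1 else 0 := rfl

lemma mul_eSingle_apply (f : IncidenceAlgebra R X) (x y : X) (h : x ≤ y) (a b : X) :
    (f * eSingle R x y h) a b = if b = y ∧ x ∈ Finset.Icc a b then f a x else 0 := by
  rw [IncidenceAlgebra.mul_apply]
  simp only [eSingle_apply, mul_ite, mul_one, mul_zero, ite_and]
  rw [Finset.sum_ite_eq' (Finset.Icc a b) x (fun z => if b = y then f a z else 0)]
  by_cases hx : x ∈ Finset.Icc a b <;> by_cases hy : b = y <;> simp [hx, hy]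

lemma eSingle_mul_apply (f : IncidenceAlgebra R X) (x y : X) (h : x ≤ y) (a b : X) :
    (eSingle R x y h * f) a b = if a = x ∧ y ∈ Finset.Icc a b then f y b else 0 := by
  rw [IncidenceAlgebra.mul_apply]
  simp only [eSingle_apply, ite_and, ite_mul, one_mul, zero_mul]
  by_cases hy : a = x
  · simp only [hy, if_true, true_and]
    exact Finset.sum_ite_eq' (Finset.Icc x b) y (fun z => f z b)
  · simp [hy]

end helpers

/-- For a Jordan derivation `D` of the incidence algebra `I(X,R)` over a
2-torsion free commutative ring `R`: for all `i, j ∈ X` with `i ≤ j` and `j ≤ i` (in particular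
for `i = j`), `D(e_{ij})(i,j) + D(e_{ji})(j,i) = 0`. -/
theorem jordan_derivation_eSingle_antisymm {R X : Type*} [CommRing R]
    [Preorder X] [LocallyFiniteOrder X] [DecidableEq X]
    (htf : ∀ r : R, 2 • r = 0 → r = 0)
    (D : IncidenceAlgebra R X →ₗ[R] IncidenceAlgebra R X)
    (hD : ∀ f : IncidenceAlgebra R X, D (f * f) = D f * f + f * D f) :
    ∀ i j : X, ∀ hij : i ≤ j, ∀ hji : j ≤ i,
      D (eSingle R i j hij) i j + D (eSingle R j i hji) j i = 0 := by
  intro i j hij hji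
  by_cases hne : i = j
  · subst hne
    have hee : eSingle R i i hij * eSingle R i i hij = eSingle R i i hij := by
      ext a b hab
      simp only [mul_eSingle_apply, eSingle_apply, Finset.mem_Icc]
      by_cases ha : a = i <;> by_cases hb : b = i <;> simp [ha, hb]
    have h1 := congrArg (fun u : IncidenceAlgebra R X => u i i) (hee ▸ hD (eSingle R i i hij))
    simp only [mul_eSingle_apply, eSingle_mul_apply, IncidenceAlgebra.add_apply,
      Finset.mem_Icc, le_refl, and_self, if_true] at h1
    have h0 : D (eSingle R i i hij) i i = 0 :=
      htf _ (by rw [two_smul]; linear_combination (-2 : R) * h1)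
    rw [h0]; simp
  · have hjIcc : j ∈ Finset.Icc i i := Finset.mem_Icc.2 ⟨hij, hji⟩
    have hiIcc : i ∈ Finset.Icc j j := Finset.mem_Icc.2 ⟨hji, hij⟩
    have hee : eSingle R i j hij * eSingle R i j hij = 0 := by
      ext a b hab
      simp only [mul_eSingle_apply, eSingle_apply, IncidenceAlgebra.zero_apply]
      simp [hne]
    have hff : eSingle R j i hji * eSingle R j i hji = 0 := by
      ext a b hab
      simp only [mul_eSingle_apply, eSingle_apply, IncidenceAlgebra.zero_apply]
      simp [Ne.symm hne]
    have hef : eSingle R i j hij * eSingle R j i hji = eSingle R i i le_rfl := by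
      ext a b hab
      simp only [mul_eSingle_apply, eSingle_apply, Finset.mem_Icc]
      by_cases ha : a = i <;> by_cases hb : b = i <;> simp [ha, hb, hij, hji]
    have hfe : eSingle R j i hji * eSingle R i j hij = eSingle R j j le_rfl := by
      ext a b hab
      simp only [mul_eSingle_apply, eSingle_apply, Finset.mem_Icc]
      by_cases ha : a = j <;> by_cases hb : b = j <;> simp [ha, hb, hij, hji]
    have hsum : (eSingle R i j hij + eSingle R j i hji) * (eSingle R i j hij + eSingle R j i hji)
        = eSingle R i i le_rfl + eSingle R j j le_rfl := by
      rw [mul_add, add_mul, add_mul, hee, hff, hef, hfe, zero_add, add_zero]; exact add_comm _ _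
    have h11 : eSingle R i i le_rfl * eSingle R i i le_rfl = eSingle R i i le_rfl := by
      ext a b hab
      simp only [mul_eSingle_apply, eSingle_apply, Finset.mem_Icc]
      by_cases ha : a = i <;> by_cases hb : b = i <;> simp [ha, hb]
    have h22 : eSingle R j j le_rfl * eSingle R j j le_rfl = eSingle R j j le_rfl := by
      ext a b hab
      simp only [mul_eSingle_apply, eSingle_apply, Finset.mem_Icc]
      by_cases ha : a = j <;> by_cases hb : b = j <;> simp [ha, hb]
    have h12 : eSingle R i i le_rfl * eSingle R j j le_rfl = 0 := by
      ext a b hab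
      simp only [mul_eSingle_apply, eSingle_apply, IncidenceAlgebra.zero_apply, Finset.mem_Icc]
      by_cases hb : b = j <;> by_cases ha : a = i <;> simp [ha, hb, hne, Ne.symm hne]
    have h21 : eSingle R j j le_rfl * eSingle R i i le_rfl = 0 := by
      ext a b hab
      simp only [mul_eSingle_apply, eSingle_apply, IncidenceAlgebra.zero_apply, Finset.mem_Icc]
      by_cases hb : b = i <;> by_cases ha : a = j <;> simp [ha, hb, hne, Ne.symm hne]
    have hgg : (eSingle R i i le_rfl + eSingle R j j le_rfl) *
        (eSingle R i i le_rfl + eSingle R j j le_rfl)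
        = eSingle R i i le_rfl + eSingle R j j le_rfl := by
      rw [mul_add, add_mul, add_mul, h11, h22, h12, h21, zero_add, add_zero]
    have hDg : D (eSingle R i i le_rfl) i i + D (eSingle R j j le_rfl) i i = 0 := by
      have h1 := congrArg (fun u : IncidenceAlgebra R X => u i i)
        (hgg ▸ hD (eSingle R i i le_rfl + eSingle R j j le_rfl))
      simp only [map_add, mul_add, add_mul, mul_eSingle_apply, eSingle_mul_apply,
        IncidenceAlgebra.add_apply, Finset.mem_Icc, le_refl, and_self, if_true, hne,
        Ne.symm hne, false_and, and_false, if_false, add_zero, zero_add] at h1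
      refine htf _ ?_
      rw [two_smul]
      linear_combination (-2 : R) * h1
    have hpol := hD (eSingle R i j hij + eSingle R j i hji)
    rw [hsum] at hpol
    have h2 := congrArg (fun u : IncidenceAlgebra R X => u i i) hpol
    simp only [map_add, mul_add, add_mul, mul_eSingle_apply, eSingle_mul_apply,
      IncidenceAlgebra.add_apply, Finset.mem_Icc, le_refl, and_self, if_true, hij, hji, hne,
      Ne.symm hne, false_and, and_false, if_false, true_and, and_true, add_zero, zero_add] at h2
    have hDf : D (eSingle R j i hji) i j = 0 := by
      have h3 := congrArg (fun u : IncidenceAlgebra R X => u i i) (hff ▸ hD (eSingle R j i hji))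
      simp only [map_zero, IncidenceAlgebra.zero_apply, mul_eSingle_apply, eSingle_mul_apply,
        IncidenceAlgebra.add_apply, Finset.mem_Icc, hij, hji, hne, Ne.symm hne, and_self,
        le_refl, false_and, and_false, if_false, if_true, true_and, and_true,
        add_zero, zero_add] at h3
      linear_combination -h3
    have hDe : D (eSingle R i j hij) j i = 0 := by
      have h4 := congrArg (fun u : IncidenceAlgebra R X => u j j) (hee ▸ hD (eSingle R i j hij))
      simp only [map_zero, IncidenceAlgebra.zero_apply, mul_eSingle_apply, eSingle_mul_apply,
        IncidenceAlgebra.add_apply, Finset.mem_Icc, hij, hji, hne, Ne.symm hne, and_self,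
        le_refl, false_and, and_false, if_false, if_true, true_and, and_true,
        add_zero, zero_add] at h4
      linear_combination -h4
    linear_combination -h2 + hDg - hDf - hDe
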